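/- arXiv:2411.03963 — 2 statements merged into one kernel-verified Lean document; each statement's English description precedes it below -/
import Mathlib

section
/- Let U and Y be complex Hilbert spaces, L : U → Y a bounded linear operator, α > 0, v ∈ Y, and G, G_n : Y → Y (n ∈ ℕ) bounded linear operators such that G_n y → G y and G_n* y → G* y in Y for every y ∈ Y as n → ∞. With ĝ_n := −(α·I_U + L*G_n*G_n L)⁻¹(L*G_n*G_n v) and ĝ := −(α·I_U + L*G*G L)⁻¹(L*G*G v), the optimal final states converge: v + L ĝ_n → v + L ĝ in Y as n → ∞. -/
open ContinuousLinearMap Filter Topology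

/-!
Both `ĝₙ` and `ĝ` solve `Λ g = -L*G*G v` with `Λ = α + (GL)*(GL)`, and `Re ⟪Λ g, g⟫ ≥ α‖g‖²`
bounds every inverse `Λₙ⁻¹` by `α⁻¹`, uniformly in `n`. By Banach–Steinhaus the adjoints `Gₙ*`
are uniformly bounded too, so `Gₙ*Gₙ → G*G` strongly, hence `Λₙ → Λ` strongly, and the uniform
bound on `Λₙ⁻¹` turns the resolvent identity `Λₙ⁻¹ - Λ⁻¹ = Λₙ⁻¹ (Λ - Λₙ) Λ⁻¹` into strong
convergence `Λₙ⁻¹ → Λ⁻¹`.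
-/

section StrongConvergence

variable {𝕜 E F : Type*} [NontriviallyNormedField 𝕜]
  [NormedAddCommGroup E] [NormedSpace 𝕜 E] [NormedAddCommGroup F] [NormedSpace 𝕜 F]

theorem exists_norm_le_of_tendsto_apply [CompleteSpace E] {B : ℕ → E →L[𝕜] F}
    {B₀ : E →L[𝕜] F} (hB : ∀ x, Tendsto (fun n => B n x) atTop (𝓝 (B₀ x))) :
    ∃ C, ∀ n, ‖B n‖ ≤ C :=
  banach_steinhaus fun x =>
    let ⟨M, hM⟩ := (hB x).norm.bddAbove_range
    ⟨M, fun n => hM ⟨n, rfl⟩⟩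

theorem norm_le_inv_of_mul_norm_le_norm_apply {α : ℝ} (hα : 0 < α)
    {Λ Λinv : E →L[𝕜] E} (hcoercive : ∀ g, α * ‖g‖ ≤ ‖Λ g‖) (hright : Λ.comp Λinv = 1) :
    ‖Λinv‖ ≤ α⁻¹ := by
  refine opNorm_le_bound _ (inv_nonneg.mpr hα.le) fun x => ?_
  have hx : Λ (Λinv x) = x := congr($hright x)
  rw [inv_mul_eq_div, le_div_iff₀ hα, mul_comm]
  simpa [hx] using hcoercive (Λinv x)

variable {ι : Type*} {l : Filter ι} {B : ι → E →L[𝕜] F} {C : ℝ}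

theorem tendsto_apply_zero_of_norm_le (hB : ∀ i, ‖B i‖ ≤ C) {z : ι → E}
    (hz : Tendsto z l (𝓝 0)) : Tendsto (fun i => B i (z i)) l (𝓝 0) := by
  refine squeeze_zero_norm (fun i => (B i).le_of_opNorm_le (hB i) (z i)) ?_
  simpa using (hz.norm.const_mul C)

theorem tendsto_apply_apply_of_norm_le (hB : ∀ i, ‖B i‖ ≤ C) {B₀ : E →L[𝕜] F}
    (hB₀ : ∀ x, Tendsto (fun i => B i x) l (𝓝 (B₀ x))) {x : ι → E} {x₀ : E}
    (hx : Tendsto x l (𝓝 x₀)) : Tendsto (fun i => B i (x i)) l (𝓝 (B₀ x₀)) := by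
  have hsmall := tendsto_apply_zero_of_norm_le hB (tendsto_sub_nhds_zero_iff.mpr hx)
  simpa [map_sub] using hsmall.add (hB₀ x₀)

theorem tendsto_inverse_apply_of_norm_le {Λ : ι → E →L[𝕜] E} {Λ₀ Λ₀inv : E →L[𝕜] E}
    {Λinv : ι → E →L[𝕜] E} (hΛ : ∀ x, Tendsto (fun i => Λ i x) l (𝓝 (Λ₀ x)))
    (hbound : ∀ i, ‖Λinv i‖ ≤ C) (hleft : ∀ i, (Λinv i).comp (Λ i) = 1)
    (hright : Λ₀.comp Λ₀inv = 1) {x : ι → E} {x₀ : E} (hx : Tendsto x l (𝓝 x₀)) :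
    Tendsto (fun i => Λinv i (x i)) l (𝓝 (Λ₀inv x₀)) := by
  set u := Λ₀inv x₀
  have hΛu : Λ₀ u = x₀ := congr($hright x₀)
  -- `Λᵢ⁻¹ xᵢ = u + Λᵢ⁻¹ (xᵢ - Λᵢ u)`, and `xᵢ - Λᵢ u → x₀ - Λ₀ u = 0`
  have hdefect : Tendsto (fun i => x i - Λ i u) l (𝓝 0) := by
    simpa [hΛu] using hx.sub (hΛ u)
  have hsplit : ∀ i, Λinv i (x i) = Λinv i (x i - Λ i u) + u := fun i => by
    rw [map_sub, ← comp_apply, hleft i, one_apply_eq_self, sub_add_cancel]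
  rw [tendsto_congr hsplit]
  simpa using (tendsto_apply_zero_of_norm_le hbound hdefect).add_const u

end StrongConvergence

section Coercive

variable {𝕜 E F : Type*} [RCLike 𝕜]
  [NormedAddCommGroup E] [InnerProductSpace 𝕜 E] [CompleteSpace E]
  [NormedAddCommGroup F] [InnerProductSpace 𝕜 F] [CompleteSpace F]

theorem re_inner_smul_one_add_adjoint_comp_self_apply (α : ℝ) (T : E →L[𝕜] F) (g : E) :
    RCLike.re (inner 𝕜 (((α : 𝕜) • (1 : E →L[𝕜] E) + (adjoint T).comp T) g) g) =
      α * ‖g‖ ^ 2 + ‖T g‖ ^ 2 := by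
  simp only [add_apply, smul_apply, comp_apply, inner_add_left, inner_smul_left,
    adjoint_inner_left, inner_self_eq_norm_sq_to_K, map_add, RCLike.conj_ofReal]
  norm_cast
  simp

theorem mul_norm_le_norm_smul_one_add_adjoint_comp_self_apply (α : ℝ) (T : E →L[𝕜] F) (g : E) :
    α * ‖g‖ ≤ ‖((α : 𝕜) • (1 : E →L[𝕜] E) + (adjoint T).comp T) g‖ := by
  set Λ := (α : 𝕜) • (1 : E →L[𝕜] E) + (adjoint T).comp T
  rcases eq_or_ne g 0 with rfl | hg
  · simp
  refine le_of_mul_le_mul_right ?_ (norm_pos_iff.mpr hg)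
  calc α * ‖g‖ * ‖g‖ ≤ α * ‖g‖ ^ 2 + ‖T g‖ ^ 2 := by
        rw [mul_assoc, ← sq]
        exact le_add_of_nonneg_right (sq_nonneg _)
    _ = RCLike.re (inner 𝕜 (Λ g) g) := (re_inner_smul_one_add_adjoint_comp_self_apply α T g).symm
    _ ≤ ‖Λ g‖ * ‖g‖ := re_inner_le_norm _ _

end Coercive

theorem stmt16_general
    {U Y : Type*}
    [NormedAddCommGroup U] [InnerProductSpace ℂ U] [CompleteSpace U]
    [NormedAddCommGroup Y] [InnerProductSpace ℂ Y] [CompleteSpace Y]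
    (L : U →L[ℂ] Y) (α : ℝ) (hα : 0 < α) (v : Y)
    (G : Y →L[ℂ] Y) (Gn : ℕ → (Y →L[ℂ] Y))
    (hGn : ∀ y : Y, Tendsto (fun n => Gn n y) atTop (𝓝 (G y)))
    (hGnstar : ∀ y : Y, Tendsto
      (fun n => (ContinuousLinearMap.adjoint (Gn n)) y) atTop
      (𝓝 ((ContinuousLinearMap.adjoint G) y)))
    (Λn : ℕ → (U →L[ℂ] U)) (ΛG : U →L[ℂ] U)
    (hΛn : ∀ n : ℕ, Λn n = (α : ℂ) • (1 : U →L[ℂ] U) +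
      ((ContinuousLinearMap.adjoint L).comp
        ((ContinuousLinearMap.adjoint (Gn n)).comp ((Gn n).comp L))))
    (hΛG : ΛG = (α : ℂ) • (1 : U →L[ℂ] U) +
      ((ContinuousLinearMap.adjoint L).comp
        ((ContinuousLinearMap.adjoint G).comp (G.comp L))))
    (Λninv : ℕ → (U →L[ℂ] U)) (ΛGinv : U →L[ℂ] U)
    (hninv₁ : ∀ n : ℕ, (Λninv n).comp (Λn n) = 1)
    (hninv₂ : ∀ n : ℕ, (Λn n).comp (Λninv n) = 1)
    (hGinv₂ : ΛG.comp ΛGinv = 1)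
    (ghatn : ℕ → U) (ghat : U)
    (hghatn : ∀ n : ℕ, ghatn n = -(Λninv n) ((ContinuousLinearMap.adjoint L)
      ((ContinuousLinearMap.adjoint (Gn n)) ((Gn n) v))))
    (hghat : ghat = -ΛGinv ((ContinuousLinearMap.adjoint L)
      ((ContinuousLinearMap.adjoint G) (G v)))) :
    Tendsto (fun n => v + L (ghatn n)) atTop (𝓝 (v + L ghat)) := by
  obtain ⟨C, hC⟩ := exists_norm_le_of_tendsto_apply hGnstar
  have hGG : ∀ y, Tendsto (fun n => adjoint (Gn n) (Gn n y)) atTop (𝓝 (adjoint G (G y))) :=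
    fun y => tendsto_apply_apply_of_norm_le hC hGnstar (hGn y)
  have hL'GG : ∀ y, Tendsto (fun n => adjoint L (adjoint (Gn n) (Gn n y))) atTop
      (𝓝 (adjoint L (adjoint G (G y)))) :=
    fun y => ((adjoint L).continuous.tendsto _).comp (hGG y)
  have hΛ : ∀ u, Tendsto (fun n => Λn n u) atTop (𝓝 (ΛG u)) := fun u => by
    simpa [hΛn, hΛG] using (hL'GG (L u)).const_add ((α : ℂ) • u)
  have hinv : ∀ n, ‖Λninv n‖ ≤ α⁻¹ := fun n => by
    refine norm_le_inv_of_mul_norm_le_norm_apply hα (fun g => ?_) (hninv₂ n)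
    simpa [hΛn, adjoint_comp, comp_assoc] using
      mul_norm_le_norm_smul_one_add_adjoint_comp_self_apply α ((Gn n).comp L) g
  have hg : Tendsto ghatn atTop (𝓝 ghat) := by
    rw [funext hghatn, hghat]
    exact (tendsto_inverse_apply_of_norm_le hΛ hinv hninv₁ hGinv₂ (hL'GG v)).neg
  exact ((L.continuous.tendsto _).comp hg).const_add v

/-- If `G_n → G` and `G_n* → G*` strongly on `Y`, then the optimal
final states converge: `v + L ghat_n → v + L ghat` in `Y`, where
`ghat_n = −(α·I + L*G_n*G_nL)⁻¹(L*G_n*G_n v)` and `ghat = −(α·I + L*G*GL)⁻¹(L*G*G v)`. -/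
theorem stmt16
    {U Y : Type*}
    [NormedAddCommGroup U] [InnerProductSpace ℂ U] [CompleteSpace U]
    [NormedAddCommGroup Y] [InnerProductSpace ℂ Y] [CompleteSpace Y]
    (L : U →L[ℂ] Y) (α : ℝ) (hα : 0 < α) (v : Y)
    (G : Y →L[ℂ] Y) (Gn : ℕ → (Y →L[ℂ] Y))
    (hGn : ∀ y : Y, Tendsto (fun n => Gn n y) atTop (𝓝 (G y)))
    (hGnstar : ∀ y : Y, Tendsto
      (fun n => (ContinuousLinearMap.adjoint (Gn n)) y) atTop
      (𝓝 ((ContinuousLinearMap.adjoint G) y)))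
    (Λn : ℕ → (U →L[ℂ] U)) (ΛG : U →L[ℂ] U)
    (hΛn : ∀ n : ℕ, Λn n = (α : ℂ) • (1 : U →L[ℂ] U) +
      ((ContinuousLinearMap.adjoint L).comp
        ((ContinuousLinearMap.adjoint (Gn n)).comp ((Gn n).comp L))))
    (hΛG : ΛG = (α : ℂ) • (1 : U →L[ℂ] U) +
      ((ContinuousLinearMap.adjoint L).comp
        ((ContinuousLinearMap.adjoint G).comp (G.comp L))))
    (Λninv : ℕ → (U →L[ℂ] U)) (ΛGinv : U →L[ℂ] U)
    (hninv₁ : ∀ n : ℕ, (Λninv n).comp (Λn n) = 1)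
    (hninv₂ : ∀ n : ℕ, (Λn n).comp (Λninv n) = 1)
    (hGinv₁ : ΛGinv.comp ΛG = 1) (hGinv₂ : ΛG.comp ΛGinv = 1)
    (ghatn : ℕ → U) (ghat : U)
    (hghatn : ∀ n : ℕ, ghatn n = -(Λninv n) ((ContinuousLinearMap.adjoint L)
      ((ContinuousLinearMap.adjoint (Gn n)) ((Gn n) v))))
    (hghat : ghat = -ΛGinv ((ContinuousLinearMap.adjoint L)
      ((ContinuousLinearMap.adjoint G) (G v)))) :
    Tendsto (fun n => v + L (ghatn n)) atTop (𝓝 (v + L ghat)) :=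
  stmt16_general L α hα v G Gn hGn hGnstar Λn ΛG hΛn hΛG Λninv ΛGinv hninv₁ hninv₂ hGinv₂ ghatn ghat
    hghatn hghat
end

section
/- Let U and Y be complex Hilbert spaces, L : U → Y a bounded linear operator, α > 0, v ∈ Y, and G, G_n : Y → Y (n ∈ ℕ) bounded linear operators such that G_n y → G y and G_n* y → G* y in Y for every y ∈ Y as n → ∞. With ĝ_n := −(α·I_U + L*G_n*G_n L)⁻¹(L*G_n*G_n v) and ĝ := −(α·I_U + L*G*G L)⁻¹(L*G*G v), the optimal values converge: α‖ĝ_n‖² + ‖G_n(v + L ĝ_n)‖² → α‖ĝ‖² + ‖G(v + L ĝ)‖² in ℝ as n → ∞. -/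
/-!
The minimizers solve the normal equations `Λₙ ĝₙ = -L*Gₙ*Gₙ v`, `Λ ĝ = -L*G*G v` with
`Λₙ = α + (GₙL)*(GₙL) ≥ α`. By uniform boundedness the strongly convergent sequences `Gₙ`, `Gₙ*`
are bounded, so `Gₙ*Gₙ → G*G` and `Λₙ → Λ` strongly. Uniform coercivity turns strong convergence
of the operators and of the right-hand sides into `ĝₙ → ĝ`, and the costs converge with them.
-/

open ContinuousLinearMap Filter Topology

section StrongConvergence

variable {𝕜 E F : Type*} [NontriviallyNormedField 𝕜]
  [NormedAddCommGroup E] [NormedSpace 𝕜 E] [NormedAddCommGroup F] [NormedSpace 𝕜 F]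

theorem ContinuousLinearMap.tendsto_apply_of_tendsto_pointwise [CompleteSpace E]
    {T : ℕ → E →L[𝕜] F} {S : E →L[𝕜] F}
    (hT : ∀ x, Tendsto (fun n => T n x) atTop (𝓝 (S x)))
    {xn : ℕ → E} {x : E} (hx : Tendsto xn atTop (𝓝 x)) :
    Tendsto (fun n => T n (xn n)) atTop (𝓝 (S x)) := by
  obtain ⟨C, hC⟩ : ∃ C, ∀ n, ‖T n‖ ≤ C :=
    banach_steinhaus fun y => by
      obtain ⟨C, hC⟩ := (hT y).norm.bddAbove_range
      exact ⟨C, fun n => hC ⟨n, rfl⟩⟩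
  rw [tendsto_iff_norm_sub_tendsto_zero] at hx ⊢
  have hbound : ∀ n, ‖T n (xn n) - S x‖ ≤ C * ‖xn n - x‖ + ‖T n x - S x‖ := fun n =>
    calc ‖T n (xn n) - S x‖ = ‖T n (xn n - x) + (T n x - S x)‖ := by
          rw [map_sub, sub_add_sub_cancel]
      _ ≤ ‖T n‖ * ‖xn n - x‖ + ‖T n x - S x‖ :=
          (norm_add_le _ _).trans (add_le_add_left ((T n).le_opNorm _) _)
      _ ≤ C * ‖xn n - x‖ + ‖T n x - S x‖ := by gcongr; exact hC n
  refine squeeze_zero (fun _ => norm_nonneg _) hbound ?_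
  simpa using (hx.const_mul C).add (tendsto_iff_norm_sub_tendsto_zero.1 (hT x))

theorem tendsto_of_uniformly_coercive_of_tendsto_pointwise
    {Λn : ℕ → E →L[𝕜] F} {Λ : E →L[𝕜] F} {α : ℝ} (hα : 0 < α)
    (hcoer : ∀ n x, α * ‖x‖ ≤ ‖Λn n x‖)
    (hΛ : ∀ x, Tendsto (fun n => Λn n x) atTop (𝓝 (Λ x)))
    {gn : ℕ → E} {g : E} {wn : ℕ → F} {w : F} (hw : Tendsto wn atTop (𝓝 w))
    (hgn : ∀ n, Λn n (gn n) = wn n) (hg : Λ g = w) :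
    Tendsto gn atTop (𝓝 g) := by
  rw [tendsto_iff_norm_sub_tendsto_zero] at hw ⊢
  have hbound : ∀ n, ‖gn n - g‖ ≤ (‖wn n - w‖ + ‖Λn n g - Λ g‖) / α := fun n => by
    rw [le_div_iff₀' hα]
    calc α * ‖gn n - g‖ ≤ ‖Λn n (gn n - g)‖ := hcoer n _
      _ = ‖(wn n - w) - (Λn n g - Λ g)‖ := by rw [map_sub, hgn, hg]; abel_nf
      _ ≤ ‖wn n - w‖ + ‖Λn n g - Λ g‖ := norm_sub_le _ _
  refine squeeze_zero (fun _ => norm_nonneg _) hbound ?_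
  simpa using (hw.add (tendsto_iff_norm_sub_tendsto_zero.1 (hΛ g))).div_const α

end StrongConvergence

theorem ContinuousLinearMap.IsPositive.mul_norm_le_norm_smul_one_add_apply
    {𝕜 E : Type*} [RCLike 𝕜] [NormedAddCommGroup E] [InnerProductSpace 𝕜 E]
    {P : E →L[𝕜] E} (hP : P.IsPositive) (α : ℝ) (x : E) :
    α * ‖x‖ ≤ ‖((α : 𝕜) • (1 : E →L[𝕜] E) + P) x‖ := by
  have hinner : α * ‖x‖ ^ 2 ≤ RCLike.re (inner 𝕜 (((α : 𝕜) • (1 : E →L[𝕜] E) + P) x) x) := by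
    rw [add_apply, inner_add_left, map_add, smul_apply, one_apply_eq_self, inner_smul_left,
      RCLike.conj_ofReal, RCLike.re_ofReal_mul, inner_self_eq_norm_sq]
    linarith [hP.re_inner_nonneg_left x]
  rcases (norm_nonneg x).eq_or_lt with hx | hx
  · rw [← hx, mul_zero]; exact norm_nonneg _
  refine le_of_mul_le_mul_right ?_ hx
  calc α * ‖x‖ * ‖x‖ = α * ‖x‖ ^ 2 := by ring
    _ ≤ _ := hinner.trans (RCLike.re_le_norm _)
    _ ≤ _ := norm_inner_le_norm _ _

theorem stmt17_general
    {U Y : Type*}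
    [NormedAddCommGroup U] [InnerProductSpace ℂ U] [CompleteSpace U]
    [NormedAddCommGroup Y] [InnerProductSpace ℂ Y] [CompleteSpace Y]
    (L : U →L[ℂ] Y) (α : ℝ) (hα : 0 < α) (v : Y)
    (G : Y →L[ℂ] Y) (Gn : ℕ → (Y →L[ℂ] Y))
    (hGn : ∀ y : Y, Tendsto (fun n => Gn n y) atTop (𝓝 (G y)))
    (hGnstar : ∀ y : Y, Tendsto
      (fun n => (ContinuousLinearMap.adjoint (Gn n)) y) atTop
      (𝓝 ((ContinuousLinearMap.adjoint G) y)))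
    (Λn : ℕ → (U →L[ℂ] U)) (ΛG : U →L[ℂ] U)
    (hΛn : ∀ n : ℕ, Λn n = (α : ℂ) • (1 : U →L[ℂ] U) +
      ((ContinuousLinearMap.adjoint L).comp
        ((ContinuousLinearMap.adjoint (Gn n)).comp ((Gn n).comp L))))
    (hΛG : ΛG = (α : ℂ) • (1 : U →L[ℂ] U) +
      ((ContinuousLinearMap.adjoint L).comp
        ((ContinuousLinearMap.adjoint G).comp (G.comp L))))
    (Λninv : ℕ → (U →L[ℂ] U)) (ΛGinv : U →L[ℂ] U)
    (hninv₂ : ∀ n : ℕ, (Λn n).comp (Λninv n) = 1)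
    (hGinv₂ : ΛG.comp ΛGinv = 1)
    (ghatn : ℕ → U) (ghat : U)
    (hghatn : ∀ n : ℕ, ghatn n = -(Λninv n) ((ContinuousLinearMap.adjoint L)
      ((ContinuousLinearMap.adjoint (Gn n)) ((Gn n) v))))
    (hghat : ghat = -ΛGinv ((ContinuousLinearMap.adjoint L)
      ((ContinuousLinearMap.adjoint G) (G v)))) :
    Tendsto (fun n => α * ‖ghatn n‖ ^ 2 + ‖(Gn n) (v + L (ghatn n))‖ ^ 2)
      atTop (𝓝 (α * ‖ghat‖ ^ 2 + ‖G (v + L ghat)‖ ^ 2)) := by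
  have hGG : ∀ y, Tendsto (fun n => adjoint (Gn n) (Gn n y)) atTop (𝓝 (adjoint G (G y))) :=
    fun y => tendsto_apply_of_tendsto_pointwise hGnstar (hGn y)
  have hΛ : ∀ u, Tendsto (fun n => Λn n u) atTop (𝓝 (ΛG u)) := fun u => by
    simp only [hΛn, hΛG, add_apply, comp_apply]
    exact tendsto_const_nhds.add (((adjoint L).continuous.tendsto _).comp (hGG (L u)))
  have hcoer : ∀ n u, α * ‖u‖ ≤ ‖Λn n u‖ := fun n u => by
    have hP := isPositive_adjoint_comp_self (Gn n ∘L L)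
    rw [adjoint_comp, comp_assoc] at hP
    exact hΛn n ▸ hP.mul_norm_le_norm_smul_one_add_apply α u
  have hg : Tendsto ghatn atTop (𝓝 ghat) := by
    refine tendsto_of_uniformly_coercive_of_tendsto_pointwise hα hcoer hΛ
      (((adjoint L).continuous.tendsto _).comp (hGG v)).neg (fun n => ?_) ?_
    · rw [hghatn, map_neg, ← comp_apply, hninv₂, one_apply_eq_self]; rfl
    · rw [hghat, map_neg, ← comp_apply, hGinv₂, one_apply_eq_self]
  have hGv : Tendsto (fun n => Gn n (v + L (ghatn n))) atTop (𝓝 (G (v + L ghat))) :=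
    tendsto_apply_of_tendsto_pointwise hGn
      (tendsto_const_nhds.add ((L.continuous.tendsto _).comp hg))
  exact ((hg.norm.pow 2).const_mul α).add (hGv.norm.pow 2)

/-- If `G_n → G` and `G_n* → G*` strongly on `Y`, then the optimal
values converge: `α‖ghat_n‖² + ‖G_n(v + L ghat_n)‖² → α‖ghat‖² + ‖G(v + L ghat)‖²`,
where `ghat_n = −(α·I + L*G_n*G_nL)⁻¹(L*G_n*G_n v)` and
`ghat = −(α·I + L*G*GL)⁻¹(L*G*G v)`. -/
theorem stmt17
    {U Y : Type*}
    [NormedAddCommGroup U] [InnerProductSpace ℂ U] [CompleteSpace U]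
    [NormedAddCommGroup Y] [InnerProductSpace ℂ Y] [CompleteSpace Y]
    (L : U →L[ℂ] Y) (α : ℝ) (hα : 0 < α) (v : Y)
    (G : Y →L[ℂ] Y) (Gn : ℕ → (Y →L[ℂ] Y))
    (hGn : ∀ y : Y, Tendsto (fun n => Gn n y) atTop (𝓝 (G y)))
    (hGnstar : ∀ y : Y, Tendsto
      (fun n => (ContinuousLinearMap.adjoint (Gn n)) y) atTop
      (𝓝 ((ContinuousLinearMap.adjoint G) y)))
    (Λn : ℕ → (U →L[ℂ] U)) (ΛG : U →L[ℂ] U)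
    (hΛn : ∀ n : ℕ, Λn n = (α : ℂ) • (1 : U →L[ℂ] U) +
      ((ContinuousLinearMap.adjoint L).comp
        ((ContinuousLinearMap.adjoint (Gn n)).comp ((Gn n).comp L))))
    (hΛG : ΛG = (α : ℂ) • (1 : U →L[ℂ] U) +
      ((ContinuousLinearMap.adjoint L).comp
        ((ContinuousLinearMap.adjoint G).comp (G.comp L))))
    (Λninv : ℕ → (U →L[ℂ] U)) (ΛGinv : U →L[ℂ] U)
    (hninv₁ : ∀ n : ℕ, (Λninv n).comp (Λn n) = 1)
    (hninv₂ : ∀ n : ℕ, (Λn n).comp (Λninv n) = 1)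
    (hGinv₁ : ΛGinv.comp ΛG = 1) (hGinv₂ : ΛG.comp ΛGinv = 1)
    (ghatn : ℕ → U) (ghat : U)
    (hghatn : ∀ n : ℕ, ghatn n = -(Λninv n) ((ContinuousLinearMap.adjoint L)
      ((ContinuousLinearMap.adjoint (Gn n)) ((Gn n) v))))
    (hghat : ghat = -ΛGinv ((ContinuousLinearMap.adjoint L)
      ((ContinuousLinearMap.adjoint G) (G v)))) :
    Tendsto (fun n => α * ‖ghatn n‖ ^ 2 + ‖(Gn n) (v + L (ghatn n))‖ ^ 2)
      atTop (𝓝 (α * ‖ghat‖ ^ 2 + ‖G (v + L ghat)‖ ^ 2)) :=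
  stmt17_general L α hα v G Gn hGn hGnstar Λn ΛG hΛn hΛG Λninv ΛGinv hninv₂ hGinv₂ ghatn ghat hghatn
    hghat
end
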